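/- Every graph of maximum degree at most 3 admits a bipartizing matching. -/

import Mathlib

/-!
Two-colour the vertices so that the number of monochromatic edges is minimal. Recolouring a
single vertex `v` turns its `d` monochromatic edges into `deg v - d` and leaves all other edges
alone, so minimality forces `2 d ≤ deg v`; when `deg v ≤ 3` this means `d ≤ 1`. Hence the
monochromatic edges form a matching, and the colouring is proper on the remaining edges.
-/

open Finset

/-- `M` is a bipartizing matching of `G`: `M` is a subgraph of `G` that is a matching
(every vertex has at most one `M`-neighbor) and `G - M` is bipartite (2-colorable). -/
def IsBipartizingMatching {V : Type*} (G M : SimpleGraph V) : Prop :=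
  M ≤ G ∧ (∀ v u w : V, M.Adj v u → M.Adj v w → u = w) ∧ (G \ M).Colorable 2

namespace SimpleGraph

variable {V : Type*}

theorem card_edgeFinset_add_degree_eq_of_deleteIncidenceSet_eq [Fintype V] [DecidableEq V]
    {H H' : SimpleGraph V} [DecidableRel H.Adj] [DecidableRel H'.Adj] {v : V}
    (h : H.deleteIncidenceSet v = H'.deleteIncidenceSet v) :
    #H.edgeFinset + H'.degree v = #H'.edgeFinset + H.degree v := by
  have hcard : #(H.deleteIncidenceSet v).edgeFinset = #(H'.deleteIncidenceSet v).edgeFinset := by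
    simp only [edgeFinset_card]
    exact Fintype.card_congr (Equiv.setCongr (congrArg edgeSet h))
  rw [card_edgeFinset_deleteIncidenceSet, card_edgeFinset_deleteIncidenceSet] at hcard
  have := H.degree_le_card_edgeFinset v
  have := H'.degree_le_card_edgeFinset v
  omega

section monochromatic

variable (G : SimpleGraph V) {α : Type*} (c : V → α)

def monochromatic : SimpleGraph V where
  Adj u w := G.Adj u w ∧ c u = c w
  symm := ⟨fun _ _ h => ⟨h.1.symm, h.2.symm⟩⟩
  loopless := ⟨fun _ h => G.irrefl h.1⟩

variable {G c}

@[simp]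
theorem monochromatic_adj {u w : V} : (G.monochromatic c).Adj u w ↔ G.Adj u w ∧ c u = c w :=
  Iff.rfl

instance [DecidableRel G.Adj] [DecidableEq α] : DecidableRel (G.monochromatic c).Adj :=
  fun u w => inferInstanceAs (Decidable (G.Adj u w ∧ c u = c w))

variable (G c)

theorem monochromatic_le : G.monochromatic c ≤ G := fun _ _ h => h.1

theorem colorable_sdiff_monochromatic [Fintype α] :
    (G \ G.monochromatic c).Colorable (Fintype.card α) :=
  (Coloring.mk (G := G \ G.monochromatic c) c fun huw hc => huw.2 ⟨huw.1, hc⟩).colorable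

theorem deleteIncidenceSet_monochromatic_update [DecidableEq V] (v : V) (a : α) :
    (G.monochromatic (Function.update c v a)).deleteIncidenceSet v =
      (G.monochromatic c).deleteIncidenceSet v := by
  ext u w
  simp +contextual [deleteIncidenceSet_adj, Function.update_of_ne]

theorem neighborFinset_monochromatic [Fintype V] [DecidableRel G.Adj] [DecidableEq α] (v : V) :
    (G.monochromatic c).neighborFinset v = (G.neighborFinset v).filter (c v = c ·) := by
  ext u
  simp

end monochromatic

variable (G : SimpleGraph V)

theorem degree_monochromatic_flip_add_degree_monochromatic [Fintype V] [DecidableEq V]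
    [DecidableRel G.Adj] (c : V → Bool) (v : V) :
    (G.monochromatic (Function.update c v (!c v))).degree v + (G.monochromatic c).degree v =
      G.degree v := by
  have hflip : (G.monochromatic (Function.update c v (!c v))).neighborFinset v =
      (G.neighborFinset v).filter (fun u => c v ≠ c u) := by
    rw [neighborFinset_monochromatic]
    refine filter_congr fun u hu => ?_
    have huv : u ≠ v := (G.ne_of_adj ((G.mem_neighborFinset v u).1 hu)).symm
    rw [Function.update_self, Function.update_of_ne huv]
    cases c v <;> cases c u <;> decide
  simp_rw [← card_neighborFinset_eq_degree, hflip, neighborFinset_monochromatic, add_comm]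
  exact card_filter_add_card_filter_not (c v = c ·)

theorem two_mul_degree_monochromatic_le_of_forall_card_le [Fintype V] [DecidableEq V]
    [DecidableRel G.Adj] {c : V → Bool}
    (hc : ∀ c' : V → Bool, #(G.monochromatic c).edgeFinset ≤ #(G.monochromatic c').edgeFinset)
    (v : V) :
    2 * (G.monochromatic c).degree v ≤ G.degree v := by
  have hcard := card_edgeFinset_add_degree_eq_of_deleteIncidenceSet_eq
    (G.deleteIncidenceSet_monochromatic_update c v (!c v))
  have hdeg := G.degree_monochromatic_flip_add_degree_monochromatic c v
  have := hc (Function.update c v (!c v))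
  omega

theorem isBipartizingMatching_monochromatic [Fintype V] [DecidableRel G.Adj] (c : V → Bool)
    (hc : ∀ v, (G.monochromatic c).degree v ≤ 1) :
    IsBipartizingMatching G (G.monochromatic c) := by
  refine ⟨G.monochromatic_le c, fun v u w hu hw => ?_, G.colorable_sdiff_monochromatic c⟩
  simp_rw [← card_neighborFinset_eq_degree] at hc
  exact card_le_one.1 (hc v) u ((mem_neighborFinset _ v u).2 hu) w ((mem_neighborFinset _ v w).2 hw)

end SimpleGraph

/-- Every graph of maximum degree at most `3` admits a bipartizing matching. -/
theorem bm_of_maxDegree_le_three {V : Type*} [Fintype V] (G : SimpleGraph V)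
    [DecidableRel G.Adj] (h : ∀ v : V, G.degree v ≤ 3) :
    ∃ M, IsBipartizingMatching G M := by
  classical
  obtain ⟨c, hc⟩ := Finite.exists_min fun c : V → Bool => #(G.monochromatic c).edgeFinset
  refine ⟨_, G.isBipartizingMatching_monochromatic c fun v => ?_⟩
  have := G.two_mul_degree_monochromatic_le_of_forall_card_le hc v
  have := h v
  omega
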